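/- If f₀ satisfies f₀(X₁X₂) = f₀(X₁)X₂ + X₁f₀(X₂) for all X₁, X₂ in a matrix group G, and X, X̄ satisfy Ẋ = X v_b + v_g X + f₀(X) and X̄' = X̄ v_b + X̄ w + v_g X̄ + f₀(X̄), then the right-invariant error η_R = X̄ X^{-1} satisfies η̇_R = v_g η_R − η_R v_g + (Ad_{X̄} w) η_R + f₀(η_R). -/

import Mathlib

/-! Differentiate `η_R = X̄ X⁻¹` by the product rule, using `(X⁻¹)' = -X⁻¹ Ẋ X⁻¹`. The `v_b` terms
cancel, and the Leibniz rule applied to `η_R X = X̄` turns the remaining `f₀(X̄) X⁻¹ - η_R f₀(X) X⁻¹`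
into `f₀(η_R)`. -/

attribute [local instance] Matrix.linftyOpNormedRing Matrix.linftyOpNormedAlgebra

theorem HasDerivAt.ringInverse {𝕜 R : Type*} [NontriviallyNormedField 𝕜] [NormedRing R]
    [HasSummableGeomSeries R] [NormedAlgebra 𝕜 R] {x : 𝕜 → R} {x' : R} {t : 𝕜}
    (hx : HasDerivAt x x' t) (ht : IsUnit (x t)) :
    HasDerivAt (fun s => Ring.inverse (x s))
      (-(Ring.inverse (x t) * x' * Ring.inverse (x t))) t := by
  obtain ⟨u, hu⟩ := ht
  have h := (hu ▸ hasFDerivAt_ringInverse (𝕜 := 𝕜) u).comp_hasDerivAt t hx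
  simpa [← hu, Function.comp_def, Ring.inverse_unit] using h

theorem map_mul_ringInverse_of_leibniz {R : Type*} [Ring R] (f : R → R)
    (hf : ∀ x y : R, IsUnit x → IsUnit y → f (x * y) = f x * y + x * f y)
    {a b : R} (ha : IsUnit a) (hb : IsUnit b) :
    f (b * Ring.inverse a) = f b * Ring.inverse a - b * Ring.inverse a * f a * Ring.inverse a := by
  have h := hf (b * Ring.inverse a) a (hb.mul ha.ringInverse) ha
  rw [Ring.inverse_mul_cancel_right _ _ ha] at h
  rw [h, add_mul, Ring.mul_inverse_cancel_right _ _ ha, add_sub_cancel_right]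

/-- If `f₀` satisfies `f₀(X₁X₂) = f₀(X₁)X₂ + X₁f₀(X₂)` on the group, and
`X, X̄` satisfy `Ẋ = X v_b + v_g X + f₀(X)` and `X̄' = X̄ v_b + X̄ w + v_g X̄ + f₀(X̄)`, then the
right-invariant error `η_R = X̄ X⁻¹` satisfies
`η̇_R = v_g η_R − η_R v_g + (Ad_{X̄} w) η_R + f₀(η_R)`, where `Ad_{X̄} w = X̄ w X̄⁻¹`. -/
theorem right_invariant_error_dynamics (n : ℕ)
    (f₀ : Matrix (Fin n) (Fin n) ℝ → Matrix (Fin n) (Fin n) ℝ)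
    (hf : ∀ X₁ X₂ : Matrix (Fin n) (Fin n) ℝ, IsUnit X₁ → IsUnit X₂ →
      f₀ (X₁ * X₂) = f₀ X₁ * X₂ + X₁ * f₀ X₂)
    (X Xb vb vg w : ℝ → Matrix (Fin n) (Fin n) ℝ)
    (hXunit : ∀ t, IsUnit (X t)) (hXbunit : ∀ t, IsUnit (Xb t))
    (hX : ∀ t, HasDerivAt X (X t * vb t + vg t * X t + f₀ (X t)) t)
    (hXb : ∀ t, HasDerivAt Xb (Xb t * vb t + Xb t * w t + vg t * Xb t + f₀ (Xb t)) t)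
    (t : ℝ) :
    HasDerivAt (fun s => Xb s * (X s)⁻¹)
      (vg t * (Xb t * (X t)⁻¹) - (Xb t * (X t)⁻¹) * vg t
        + (Xb t * w t * (Xb t)⁻¹) * (Xb t * (X t)⁻¹) + f₀ (Xb t * (X t)⁻¹)) t := by
  simp only [Matrix.nonsing_inv_eq_ringInverse]
  have hXinv := (hX t).ringInverse (hXunit t)
  refine ((hXb t).mul hXinv).congr_deriv ?_
  rw [map_mul_ringInverse_of_leibniz f₀ hf (hXunit t) (hXbunit t)]
  simp only [mul_add, add_mul, mul_neg, neg_add, mul_assoc, mul_one,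
    Ring.mul_inverse_cancel _ (hXunit t), Ring.inverse_mul_cancel_left _ _ (hXunit t),
    Ring.inverse_mul_cancel_left _ _ (hXbunit t)]
  abel
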